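/- Let X be a finite nonempty alphabet and L ⊆ X* a nonempty language. Then L = DD_2(F) for some normal fuzzy finite automaton F over X if and only if L = DW(A) for some directable deterministic finite automaton A over X. The same holds with DD_2 replaced by DD_3. -/

import Mathlib

open scoped Classical

/-- Extended fuzzy transition function `f*` of a fuzzy finite automaton. -/
noncomputable def fstar {A X : Type*} [Fintype A] [Nonempty A]
    (f : A → X → A → unitInterval) : A → List X → A → unitInterval
  | a, [], b => if b = a then 1 else 0
  | a, x :: v, b => Finset.univ.sup' Finset.univ_nonempty fun c => min (f a x c) (fstar f c v b)

/-- `F(a, w)`: the set of states reachable from `a` by `w` with positive degree. -/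
def freach {A X : Type*} [Fintype A] [Nonempty A]
    (f : A → X → A → unitInterval) (a : A) (w : List X) : Set A :=
  {b | 0 < fstar f a w b}

/-- A word is DD1-directing: some state `c` is reached from every state with the same
positive degree `r`, and no other state is reachable. -/
def IsDD1 {A X : Type*} [Fintype A] [Nonempty A] (f : A → X → A → unitInterval)
    (w : List X) : Prop :=
  ∃ (c : A) (r : unitInterval), 0 < r ∧
    ∀ a, fstar f a w c = r ∧ ∀ b, b ≠ c → fstar f a w b = 0

/-- A word is DD2-directing: the fuzzy set of reached states is independent of the start. -/
def IsDD2 {A X : Type*} [Fintype A] [Nonempty A] (f : A → X → A → unitInterval)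
    (w : List X) : Prop :=
  ∀ a b c, fstar f a w c = fstar f b w c

/-- A word is DD3-directing: some state `c` has positive and maximal reachability degree
from every state. -/
def IsDD3 {A X : Type*} [Fintype A] [Nonempty A] (f : A → X → A → unitInterval)
    (w : List X) : Prop :=
  ∃ c, ∀ a, 0 < fstar f a w c ∧ ∀ b, fstar f a w b ≤ fstar f a w c

def DD1set {A X : Type*} [Fintype A] [Nonempty A] (f : A → X → A → unitInterval) :
    Set (List X) := {w | IsDD1 f w}

def DD2set {A X : Type*} [Fintype A] [Nonempty A] (f : A → X → A → unitInterval) :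
    Set (List X) := {w | IsDD2 f w}

def DD3set {A X : Type*} [Fintype A] [Nonempty A] (f : A → X → A → unitInterval) :
    Set (List X) := {w | IsDD3 f w}

/-- Extended transition function of a deterministic finite automaton. -/
def dstar {Q X : Type*} (δ : Q → X → Q) : Q → List X → Q
  | q, [] => q
  | q, x :: w => dstar δ (δ q x) w

/-!
Determinisation. For DD2, let a DFA act on fuzzy rows of height `1` with entries among the
finitely many degrees of `f`, by max–min composition with `f`. The row of `a` after `w` is
`f*(a, w, ·)`, and because every row has height `1`, `w` is DD2-directing exactly when it sends
all rows to one row. For DD3, normality forces the maximal degree in every row of `f*` to be `1`,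
so `w` is DD3-directing iff some state is reached with degree `1` from every state. This is read
off the subset automaton on families of nonempty sets; the families with a common point form a
closed set, and collapsing it to a sink yields a DFA whose directing words are exactly these `w`.
Conversely, a DFA seen as a crisp FFA has DD2 = DD3 = DW.
-/

open Finset

def directingWords {Q X : Type*} (δ : Q → X → Q) : Set (List X) :=
  {w | ∃ c, ∀ q, dstar δ q w = c}

noncomputable section Collapse

variable {S : Type} {X : Type*} (step : S → X → S) (F : Set S)

def collapseState (s : S) : Option {s // s ∉ F} :=
  if h : s ∈ F then none else some ⟨s, h⟩

def collapseStep : Option {s // s ∉ F} → X → Option {s // s ∉ F}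
  | none, _ => none
  | some s, x => collapseState F (step s x)

@[simp]
lemma collapseState_eq_none {s : S} : collapseState F s = none ↔ s ∈ F := by
  unfold collapseState; split_ifs with h <;> simp [h]

lemma dstar_collapseStep_none (w : List X) : dstar (collapseStep step F) none w = none := by
  induction w with
  | nil => rfl
  | cons x w ih => exact ih

variable {step F}

lemma dstar_mem_of_mem (hF : ∀ s ∈ F, ∀ x, step s x ∈ F) (w : List X) {s : S}
    (hs : s ∈ F) : dstar step s w ∈ F := by
  induction w generalizing s with
  | nil => exact hs
  | cons x w ih => exact ih (hF s hs x)

lemma dstar_collapseStep_collapseState (hF : ∀ s ∈ F, ∀ x, step s x ∈ F) (w : List X)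
    (s : S) :
    dstar (collapseStep step F) (collapseState F s) w = collapseState F (dstar step s w) := by
  induction w generalizing s with
  | nil => rfl
  | cons x w ih =>
    by_cases hs : s ∈ F
    · rw [(collapseState_eq_none F).2 hs, dstar_collapseStep_none, eq_comm,
        collapseState_eq_none]
      exact dstar_mem_of_mem hF _ hs
    · rw [collapseState, dif_neg hs]
      exact ih (step s x)

lemma directingWords_collapseStep (hF : ∀ s ∈ F, ∀ x, step s x ∈ F) :
    directingWords (collapseStep step F) = {w | ∀ s, dstar step s w ∈ F} := by
  ext w
  constructor
  · rintro ⟨c, hc⟩ s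
    have hc_none : c = none := (hc none).symm.trans (dstar_collapseStep_none step F w)
    rw [← collapseState_eq_none F, ← dstar_collapseStep_collapseState hF, hc, hc_none]
  · intro h
    refine ⟨none, fun q => ?_⟩
    rcases q with _ | ⟨s, hs⟩
    · exact dstar_collapseStep_none step F w
    · have hq : collapseState F s = some ⟨s, hs⟩ := dif_neg hs
      rw [← hq, dstar_collapseStep_collapseState hF, collapseState_eq_none]
      exact h s

lemma exists_directingWords_eq [Finite S] (hF : ∀ s ∈ F, ∀ x, step s x ∈ F) :
    ∃ (Q : Type) (_ : Fintype Q) (_ : Nonempty Q) (δ : Q → X → Q),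
      directingWords δ = {w | ∀ s, dstar step s w ∈ F} :=
  ⟨_, Fintype.ofFinite _, ⟨none⟩, _, directingWords_collapseStep hF⟩

end Collapse

section MaxMin

variable {A B C : Type*} [Fintype A] [Nonempty A]

def maxMin (r : A → unitInterval) (M : A → B → unitInterval) (b : B) : unitInterval :=
  univ.sup' univ_nonempty fun c => r c ⊓ M c b

lemma fstar_cons {X : Type*} (f : A → X → A → unitInterval) (a : A) (x : X) (w : List X) :
    fstar f a (x :: w) = maxMin (f a x) fun c => fstar f c w :=
  rfl

lemma maxMin_maxMin [Fintype B] [Nonempty B] (r : A → unitInterval) (M : A → B → unitInterval)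
    (N : B → C → unitInterval) :
    maxMin (maxMin r M) N = maxMin r fun c => maxMin (M c) N := by
  funext d
  simp only [maxMin, sup'_inf_distrib_right, sup'_inf_distrib_left, inf_assoc]
  exact Finset.sup'_comm _ _ _

lemma maxMin_eq_of_forall_le {r : A → unitInterval} {M : A → B → unitInterval} {b : B} (a : A)
    (hle : ∀ c, r c ⊓ M c b ≤ r a ⊓ M a b) :
    maxMin r M b = r a ⊓ M a b :=
  le_antisymm (sup'_le _ _ fun c _ => hle c) (le_sup' (fun c => r c ⊓ M c b) (mem_univ a))

lemma maxMin_ite_eq (M : A → B → unitInterval) (a : A) :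
    maxMin (fun c => if c = a then 1 else 0) M = M a := by
  funext b
  refine (maxMin_eq_of_forall_le a fun c => ?_).trans (by simp [unitInterval.le_one'])
  by_cases h : c = a
  · rw [h]
  · simp [h]

lemma maxMin_fstar_nil {X : Type*} (f : A → X → A → unitInterval) (r : A → unitInterval) :
    (maxMin r fun c => fstar f c []) = r := by
  funext b
  refine (maxMin_eq_of_forall_le b fun c => ?_).trans (by simp [fstar, unitInterval.le_one'])
  by_cases h : b = c
  · rw [h]
  · simp [fstar, h]

lemma maxMin_const {r : A → unitInterval} (hr : ∃ c, r c = 1) (k : B → unitInterval) :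
    (maxMin r fun _ => k) = k := by
  obtain ⟨a, ha⟩ := hr
  funext b
  rw [maxMin_eq_of_forall_le a fun c => by simp [ha, unitInterval.le_one'], ha,
    inf_eq_right.2 unitInterval.le_one']

lemma maxMin_eq_one_iff {r : A → unitInterval} {M : A → B → unitInterval} {b : B} :
    maxMin r M b = 1 ↔ ∃ c, r c = 1 ∧ M c b = 1 := by
  constructor
  · intro h
    obtain ⟨c, -, hc⟩ := exists_mem_eq_sup' univ_nonempty fun c => r c ⊓ M c b
    have h1 : 1 ≤ r c ⊓ M c b := (h.symm.trans hc).le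
    exact ⟨c, le_antisymm unitInterval.le_one' (h1.trans inf_le_left),
      le_antisymm unitInterval.le_one' (h1.trans inf_le_right)⟩
  · rintro ⟨c, hr, hM⟩
    exact le_antisymm unitInterval.le_one' (le_sup'_of_le _ (mem_univ c) (by simp [hr, hM]))

lemma maxMin_mem {V : Set unitInterval} {r : A → unitInterval} {M : A → B → unitInterval}
    (hr : ∀ c, r c ∈ V) (hM : ∀ c b, M c b ∈ V) (b : B) : maxMin r M b ∈ V := by
  obtain ⟨c, -, hc⟩ := exists_mem_eq_sup' univ_nonempty fun c => r c ⊓ M c b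
  rw [maxMin, hc]
  rcases min_choice (r c) (M c b) with h | h <;> rw [h]
  exacts [hr c, hM c b]

end MaxMin

section Crisp

variable {A X : Type*}

noncomputable def crisp (δ : A → X → A) : A → X → A → unitInterval :=
  fun a x b => if b = δ a x then 1 else 0

lemma fstar_crisp [Fintype A] [Nonempty A] (δ : A → X → A) (w : List X) (a b : A) :
    fstar (crisp δ) a w b = if b = dstar δ a w then 1 else 0 := by
  induction w generalizing a with
  | nil => rfl
  | cons x w ih =>
    rw [fstar_cons]
    exact (congrFun (maxMin_ite_eq _ (δ a x)) b).trans (ih (δ a x))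

lemma crisp_normal (δ : A → X → A) (a : A) (x : X) : ∃ b, crisp δ a x b = 1 :=
  ⟨δ a x, if_pos rfl⟩

lemma DD2set_crisp [Fintype A] [Nonempty A] (δ : A → X → A) :
    DD2set (crisp δ) = directingWords δ := by
  ext w
  constructor
  · intro h
    obtain ⟨a₀⟩ := ‹Nonempty A›
    refine ⟨dstar δ a₀ w, fun a => ?_⟩
    by_contra hne
    simpa [fstar_crisp, Ne.symm hne] using h a a₀ (dstar δ a₀ w)
  · rintro ⟨c, hc⟩ a b d
    rw [fstar_crisp, fstar_crisp, hc a, hc b]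

lemma DD3set_crisp [Fintype A] [Nonempty A] (δ : A → X → A) :
    DD3set (crisp δ) = directingWords δ := by
  ext w
  constructor
  · rintro ⟨c, hc⟩
    refine ⟨c, fun a => ?_⟩
    by_contra hne
    have := (hc a).1
    rw [fstar_crisp, if_neg (Ne.symm hne)] at this
    exact this.false
  · rintro ⟨c, hc⟩
    refine ⟨c, fun a => ?_⟩
    simp [fstar_crisp, hc a, unitInterval.le_one']

end Crisp

section Normal

variable {A X : Type*} [Fintype A] [Nonempty A] {f : A → X → A → unitInterval}

lemma fstar_cons_eq_one {a b : A} {x : X} {w : List X} :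
    fstar f a (x :: w) b = 1 ↔ ∃ c, f a x c = 1 ∧ fstar f c w b = 1 :=
  maxMin_eq_one_iff

lemma exists_fstar_eq_one (hn : ∀ a x, ∃ b, f a x b = 1) (w : List X) (a : A) :
    ∃ b, fstar f a w b = 1 := by
  induction w generalizing a with
  | nil => exact ⟨a, if_pos rfl⟩
  | cons x w ih =>
    obtain ⟨c, hc⟩ := hn a x
    obtain ⟨b, hb⟩ := ih c
    exact ⟨b, fstar_cons_eq_one.2 ⟨c, hc, hb⟩⟩

lemma isDD3_iff (hn : ∀ a x, ∃ b, f a x b = 1) (w : List X) :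
    IsDD3 f w ↔ ∃ c, ∀ a, fstar f a w c = 1 := by
  constructor
  · rintro ⟨c, hc⟩
    refine ⟨c, fun a => ?_⟩
    obtain ⟨b, hb⟩ := exists_fstar_eq_one hn w a
    exact le_antisymm unitInterval.le_one' (hb ▸ (hc a).2 b)
  · rintro ⟨c, hc⟩
    exact ⟨c, fun a =>
      ⟨(hc a).symm ▸ zero_lt_one, fun b => (hc a).symm ▸ unitInterval.le_one'⟩⟩

end Normal

section Rows

variable {A X : Type*} (f : A → X → A → unitInterval)

def transitionValues : Set unitInterval :=
  {0, 1} ∪ Set.range fun p : A × X × A => f p.1 p.2.1 p.2.2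

def normalRows : Set (A → unitInterval) :=
  {r | (∀ b, r b ∈ transitionValues f) ∧ ∃ b, r b = 1}

lemma finite_normalRows [Finite A] [Finite X] : (normalRows f).Finite :=
  (Set.Finite.pi' fun _ => (Set.toFinite {0, 1}).union (Set.finite_range _)).subset
    fun _ hr => hr.1

noncomputable def singletonRow (a : A) : normalRows f :=
  ⟨fun c => if c = a then 1 else 0,
    fun c => by dsimp only; split_ifs <;> simp [transitionValues], a, if_pos rfl⟩

variable [Fintype A] [Nonempty A] {f} (hn : ∀ a x, ∃ b, f a x b = 1)

def rowStep (r : normalRows f) (x : X) : normalRows f :=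
  ⟨maxMin r.1 fun c => f c x,
    maxMin_mem r.2.1 fun c b => Or.inr ⟨(c, x, b), rfl⟩,
    by
      obtain ⟨c, hc⟩ := r.2.2
      obtain ⟨b, hb⟩ := hn c x
      exact ⟨b, maxMin_eq_one_iff.2 ⟨c, hc, hb⟩⟩⟩

lemma dstar_rowStep (w : List X) (r : normalRows f) :
    (dstar (rowStep hn) r w).1 = maxMin r.1 fun c => fstar f c w := by
  induction w generalizing r with
  | nil => exact (maxMin_fstar_nil f r.1).symm
  | cons x w ih =>
    rw [dstar, ih]
    exact maxMin_maxMin _ _ _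

lemma DD2set_eq_directingWords_rowStep : DD2set f = directingWords (rowStep hn) := by
  have h_single (a : A) (w : List X) :
      (dstar (rowStep hn) (singletonRow f a) w).1 = fstar f a w := by
    rw [dstar_rowStep]
    exact maxMin_ite_eq _ a
  ext w
  constructor
  · intro hw
    obtain ⟨a₀⟩ := ‹Nonempty A›
    refine ⟨dstar (rowStep hn) (singletonRow f a₀) w, fun r => Subtype.ext ?_⟩
    rw [h_single, dstar_rowStep]
    have hconst : (fun c => fstar f c w) = fun _ => fstar f a₀ w :=
      funext fun c => funext (hw c a₀)
    rw [hconst, maxMin_const r.2.2]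
  · rintro ⟨c, hc⟩ a b d
    rw [← h_single, ← h_single, hc, hc]

end Rows

section Subsets

variable {A X : Type*} {f : A → X → A → unitInterval}

def NonemptyFamily (A : Type*) : Type _ := {g : A → Set A // ∀ a, (g a).Nonempty}

def hasCommonPoint : Set (NonemptyFamily A) := {g | ∃ c, ∀ a, c ∈ g.1 a}

variable (hn : ∀ a x, ∃ b, f a x b = 1)

def subsetStep (g : NonemptyFamily A) (x : X) : NonemptyFamily A :=
  ⟨fun a => {c | ∃ b ∈ g.1 a, f b x c = 1}, fun a => by
    obtain ⟨b, hb⟩ := g.2 a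
    obtain ⟨c, hc⟩ := hn b x
    exact ⟨c, b, hb, hc⟩⟩

lemma subsetStep_mem_hasCommonPoint {g : NonemptyFamily A} (hg : g ∈ hasCommonPoint) (x : X) :
    subsetStep hn g x ∈ hasCommonPoint := by
  obtain ⟨b, hb⟩ := hg
  obtain ⟨c, hc⟩ := hn b x
  exact ⟨c, fun a => ⟨b, hb a, hc⟩⟩

variable [Fintype A] [Nonempty A]

lemma mem_dstar_subsetStep (w : List X) (g : NonemptyFamily A) (a b : A) :
    b ∈ (dstar (subsetStep hn) g w).1 a ↔ ∃ d ∈ g.1 a, fstar f d w b = 1 := by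
  induction w generalizing g with
  | nil => simp [dstar, fstar]
  | cons x w ih =>
    simp only [dstar, ih, fstar_cons_eq_one]
    constructor
    · rintro ⟨c, ⟨d, hd, hdc⟩, hcb⟩
      exact ⟨d, hd, c, hdc, hcb⟩
    · rintro ⟨d, hd, c, hdc, hcb⟩
      exact ⟨c, ⟨d, hd, hdc⟩, hcb⟩

lemma DD3set_eq_setOf_subsetStep :
    DD3set f = {w | ∀ g, dstar (subsetStep hn) g w ∈ hasCommonPoint} := by
  ext w
  change IsDD3 f w ↔ _
  rw [isDD3_iff hn]
  constructor
  · rintro ⟨c, hc⟩ g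
    refine ⟨c, fun a => ?_⟩
    obtain ⟨d, hd⟩ := g.2 a
    exact (mem_dstar_subsetStep hn w g a c).2 ⟨d, hd, hc d⟩
  · intro h
    obtain ⟨c, hc⟩ := h ⟨fun a => {a}, fun a => Set.singleton_nonempty a⟩
    refine ⟨c, fun a => ?_⟩
    obtain ⟨d, rfl, hd⟩ := (mem_dstar_subsetStep hn w _ a c).1 (hc a)
    exact hd

end Subsets

lemma exists_directingWords_eq_DD2set {A X : Type} [Fintype A] [Nonempty A] [Finite X]
    {f : A → X → A → unitInterval} (hn : ∀ a x, ∃ b, f a x b = 1) :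
    ∃ (Q : Type) (_ : Fintype Q) (_ : Nonempty Q) (δ : Q → X → Q),
      directingWords δ = DD2set f :=
  have := (finite_normalRows f).to_subtype
  ⟨normalRows f, Fintype.ofFinite _, ⟨singletonRow f (Classical.arbitrary A)⟩, rowStep hn,
    (DD2set_eq_directingWords_rowStep hn).symm⟩

lemma exists_directingWords_eq_DD3set {A X : Type} [Fintype A] [Nonempty A]
    {f : A → X → A → unitInterval} (hn : ∀ a x, ∃ b, f a x b = 1) :
    ∃ (Q : Type) (_ : Fintype Q) (_ : Nonempty Q) (δ : Q → X → Q),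
      directingWords δ = DD3set f := by
  have : Finite (NonemptyFamily A) := Subtype.finite
  rw [DD3set_eq_setOf_subsetStep hn]
  exact exists_directingWords_eq fun g hg x => subsetStep_mem_hasCommonPoint hn hg x

lemma realizable_iff_directable {X : Type}
    (D : (A : Type) → [Fintype A] → [Nonempty A] → (A → X → A → unitInterval) →
      Set (List X))
    (toDFA : ∀ (A : Type) [Fintype A] [Nonempty A] (f : A → X → A → unitInterval),
      (∀ a x, ∃ b, f a x b = 1) →
        ∃ (Q : Type) (_ : Fintype Q) (_ : Nonempty Q) (δ : Q → X → Q),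
          directingWords δ = D A f)
    (ofDFA : ∀ (A : Type) [Fintype A] [Nonempty A] (δ : A → X → A),
      D A (crisp δ) = directingWords δ)
    {L : Set (List X)} (hL : L.Nonempty) :
    (∃ (A : Type) (iF : Fintype A) (iN : Nonempty A) (f : A → X → A → unitInterval),
        (∀ (a : A) (x : X), ∃ b, f a x b = 1) ∧ L = @D A iF iN f) ↔
      ∃ (A : Type) (_ : Fintype A) (_ : Nonempty A) (δ : A → X → A),
        (∃ w : List X, ∃ c, ∀ a, dstar δ a w = c) ∧
        L = {w : List X | ∃ c, ∀ a, dstar δ a w = c} := by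
  constructor
  · rintro ⟨A, iF, iN, f, hn, rfl⟩
    obtain ⟨Q, iQ, nQ, δ, hδ⟩ := toDFA A f hn
    exact ⟨Q, iQ, nQ, δ, (hδ ▸ hL : (directingWords δ).Nonempty), hδ.symm⟩
  · rintro ⟨A, iF, iN, δ, -, rfl⟩
    exact ⟨A, iF, iN, crisp δ, crisp_normal δ, (ofDFA A δ).symm⟩

theorem stmt15_general {X : Type} [Fintype X] (L : Set (List X)) (hL : L.Nonempty) :
    ((∃ (A : Type) (iF : Fintype A) (iN : Nonempty A) (f : A → X → A → unitInterval),
        (∀ (a : A) (x : X), ∃ b, f a x b = 1) ∧ L = @DD2set A X iF iN f) ↔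
      (∃ (A : Type) (_ : Fintype A) (_ : Nonempty A) (δ : A → X → A),
        (∃ w : List X, ∃ c, ∀ a, dstar δ a w = c) ∧
        L = {w : List X | ∃ c, ∀ a, dstar δ a w = c})) ∧
    ((∃ (A : Type) (iF : Fintype A) (iN : Nonempty A) (f : A → X → A → unitInterval),
        (∀ (a : A) (x : X), ∃ b, f a x b = 1) ∧ L = @DD3set A X iF iN f) ↔
      (∃ (A : Type) (_ : Fintype A) (_ : Nonempty A) (δ : A → X → A),
        (∃ w : List X, ∃ c, ∀ a, dstar δ a w = c) ∧
        L = {w : List X | ∃ c, ∀ a, dstar δ a w = c})) :=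
  ⟨realizable_iff_directable (fun _ _ _ f => DD2set f)
      (fun _ _ _ _ hn => exists_directingWords_eq_DD2set hn) (fun _ _ _ δ => DD2set_crisp δ) hL,
    realizable_iff_directable (fun _ _ _ f => DD3set f)
      (fun _ _ _ _ hn => exists_directingWords_eq_DD3set hn) (fun _ _ _ δ => DD3set_crisp δ) hL⟩

/-- A nonempty language `L ⊆ X*` is the set of DD2-directing words of some normal FFA
iff it is the set of directing words of some directable DFA; likewise for DD3. -/
theorem stmt15 {X : Type} [Fintype X] [Nonempty X] (L : Set (List X)) (hL : L.Nonempty) :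
    ((∃ (A : Type) (iF : Fintype A) (iN : Nonempty A) (f : A → X → A → unitInterval),
        (∀ (a : A) (x : X), ∃ b, f a x b = 1) ∧ L = @DD2set A X iF iN f) ↔
      (∃ (A : Type) (_ : Fintype A) (_ : Nonempty A) (δ : A → X → A),
        (∃ w : List X, ∃ c, ∀ a, dstar δ a w = c) ∧
        L = {w : List X | ∃ c, ∀ a, dstar δ a w = c})) ∧
    ((∃ (A : Type) (iF : Fintype A) (iN : Nonempty A) (f : A → X → A → unitInterval),
        (∀ (a : A) (x : X), ∃ b, f a x b = 1) ∧ L = @DD3set A X iF iN f) ↔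
      (∃ (A : Type) (_ : Fintype A) (_ : Nonempty A) (δ : A → X → A),
        (∃ w : List X, ∃ c, ∀ a, dstar δ a w = c) ∧
        L = {w : List X | ∃ c, ∀ a, dstar δ a w = c})) :=
  stmt15_general L hL
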